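/- In the graph H_z with even z ≥ 2, running the greedy ranking algorithm where u_1, ..., u_z arrive in order and each u_i is matched to its highest-indexed unmatched neighbor v_j produces a matching of size exactly z/2 + 1. -/

import Mathlib

/-- Neighbourhood of `u_i` in the graph `H_z`. -/
def HzNbrs (z i : ℕ) : Finset ℕ :=
  if i ≤ z / 2 then
    (Finset.Icc 1 z).filter (fun j => j = 2 * i - 1 ∨ j = 2 * i ∨ j = 2 * i + 1)
  else {2 * i - z - 1}

/-- Set of `V`-vertices matched after greedily processing `u_1, …, u_i` in order,
matching each `u_i` to its *highest-indexed* unmatched neighbour. -/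
def greedyMaxMatched (z : ℕ) : ℕ → Finset ℕ
  | 0 => ∅
  | i + 1 =>
      let M := greedyMaxMatched z i
      let av := HzNbrs z (i + 1) \ M
      if h : av.Nonempty then insert (av.max' h) M else M

/-!
For `z = 2m` the run has three phases. Each `u_i` with `i < m` takes its top neighbour
`v_{2i+1}`, so the matched set is `{v_3, v_5, …, v_{2i+1}}` and the even vertices stay free;
then `u_m` takes `v_{2m}` and `u_{m+1}` takes `v_1`; finally each `u_{m+1+d}` with `d ≥ 1`
finds its only neighbour `v_{2d+1}` already taken. The matched set is
`{v_1, v_3, …, v_{2m-1}, v_{2m}}`, of size `m + 1`.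
-/

theorem mem_HzNbrs {z i x : ℕ} :
    x ∈ HzNbrs z i ↔
      (i ≤ z / 2 ∧ 1 ≤ x ∧ x ≤ z ∧ 2 * i ≤ x + 1 ∧ x ≤ 2 * i + 1) ∨
        (z / 2 < i ∧ x = 2 * i - z - 1) := by
  unfold HzNbrs
  split_ifs with hi <;> simp only [Finset.mem_filter, Finset.mem_Icc, Finset.mem_singleton] <;>
    omega

theorem greedyMaxMatched_succ_eq_insert {z i v : ℕ} {M : Finset ℕ}
    (hM : greedyMaxMatched z i = M) (hv : v ∈ HzNbrs z (i + 1)) (hvM : v ∉ M)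
    (hmax : ∀ w ∈ HzNbrs z (i + 1), w ∉ M → w ≤ v) :
    greedyMaxMatched z (i + 1) = insert v M := by
  have hgreatest : IsGreatest (↑(HzNbrs z (i + 1) \ M) : Set ℕ) v :=
    ⟨Finset.mem_sdiff.2 ⟨hv, hvM⟩, fun w hw =>
      hmax w (Finset.mem_sdiff.1 hw).1 (Finset.mem_sdiff.1 hw).2⟩
  have hne : (HzNbrs z (i + 1) \ M).Nonempty := ⟨v, hgreatest.1⟩
  simp only [greedyMaxMatched, hM, dif_pos hne, (Finset.isGreatest_max' _ hne).unique hgreatest]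

theorem greedyMaxMatched_succ_eq_self {z i : ℕ} {M : Finset ℕ} (hM : greedyMaxMatched z i = M)
    (hsub : HzNbrs z (i + 1) ⊆ M) :
    greedyMaxMatched z (i + 1) = M := by
  have hempty : ¬(HzNbrs z (i + 1) \ M).Nonempty := by rwa [Finset.sdiff_nonempty, not_not]
  simp only [greedyMaxMatched, hM, dif_neg hempty]

theorem mem_image_two_mul_add_one {s : Finset ℕ} {x : ℕ} :
    x ∈ s.image (2 * · + 1) ↔ x % 2 = 1 ∧ x / 2 ∈ s := by
  simp only [Finset.mem_image]
  constructor
  · rintro ⟨j, hj, rfl⟩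
    exact ⟨by omega, by rwa [show (2 * j + 1) / 2 = j by omega]⟩
  · rintro ⟨hodd, hs⟩
    exact ⟨x / 2, hs, by omega⟩

theorem greedyMaxMatched_two_mul_of_lt {m i : ℕ} (hi : i < m) :
    greedyMaxMatched (2 * m) i = (Finset.Ico 1 (i + 1)).image (2 * · + 1) := by
  induction i with
  | zero => rfl
  | succ i ih =>
    rw [greedyMaxMatched_succ_eq_insert (ih (by omega)) (v := 2 * i + 3)]
    · ext x
      simp only [Finset.mem_insert, mem_image_two_mul_add_one, Finset.mem_Ico]
      omega
    all_goals
      simp only [mem_HzNbrs, mem_image_two_mul_add_one, Finset.mem_Ico]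
      omega

theorem greedyMaxMatched_two_mul_self {m : ℕ} (hm : 1 ≤ m) :
    greedyMaxMatched (2 * m) m = insert (2 * m) ((Finset.Ico 1 m).image (2 * · + 1)) := by
  obtain ⟨k, rfl⟩ : ∃ k, m = k + 1 := ⟨m - 1, by omega⟩
  apply greedyMaxMatched_succ_eq_insert (greedyMaxMatched_two_mul_of_lt (Nat.lt_succ_self k))
  all_goals
    simp only [mem_HzNbrs, mem_image_two_mul_add_one, Finset.mem_Ico]
    omega

theorem greedyMaxMatched_two_mul_of_lt_of_le {m j : ℕ} (hmj : m < j) (hj : j ≤ 2 * m) :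
    greedyMaxMatched (2 * m) j = insert (2 * m) ((Finset.range m).image (2 * · + 1)) := by
  induction j with
  | zero => omega
  | succ j ih =>
    rcases Nat.lt_or_ge m j with hmj' | hjm
    · apply greedyMaxMatched_succ_eq_self (ih hmj' (by omega))
      intro x hx
      simp only [Finset.mem_insert, mem_HzNbrs, mem_image_two_mul_add_one,
        Finset.mem_range] at hx ⊢
      omega
    · obtain rfl : j = m := by omega
      rw [greedyMaxMatched_succ_eq_insert (greedyMaxMatched_two_mul_self (by omega)) (v := 1)]
      · ext x
        simp only [Finset.mem_insert, mem_image_two_mul_add_one, Finset.mem_Ico,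
          Finset.mem_range]
        omega
      all_goals
        simp only [Finset.mem_insert, mem_HzNbrs, mem_image_two_mul_add_one, Finset.mem_Ico]
        omega

/-- Greedy ranking with decreasing ranks on `H_z` (even `z ≥ 2`) produces a matching
of size exactly `z/2 + 1`. -/
theorem Hz_greedy_max_card (z : ℕ) (hz : 2 ≤ z) (hze : Even z) :
    (greedyMaxMatched z z).card = z / 2 + 1 := by
  obtain ⟨m, rfl⟩ := hze
  rw [← two_mul, greedyMaxMatched_two_mul_of_lt_of_le (by omega) le_rfl,
    Finset.card_insert_of_notMem, Finset.card_image_of_injective _ (fun a b h => by omega),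
    Finset.card_range]
  · omega
  · rw [mem_image_two_mul_add_one]
    omega
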